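/- arXiv:1405.2238 — 2 statements merged into one kernel-verified Lean document; each statement's English description precedes it below -/
import Mathlib

section
/- Let ν be an essential σ-maxitive measure on a σ-algebra 𝓑. Then ν is autocontinuous (ν ⋘ ν). Moreover, if the empty set is the only ν-negligible subset of E, then ν has a 𝓑-measurable cardinal density, i.e. there is a 𝓑-measurable c : E → [0,∞] with ν(B) = sup_{x∈B} c(x) for all B ∈ 𝓑. -/
open scoped ENNReal
open Set Filter MeasureTheory

variable {E : Type*}

/-- `f : E → [0,∞]` is `𝓑`-measurable: `{f > t}` is measurable for every `t`. -/
def Premeasurable [MeasurableSpace E] (f : E → ℝ≥0∞) : Prop :=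
  ∀ t : ℝ≥0∞, MeasurableSet {x | t < f x}

/-- A maxitive measure on the σ-algebra of measurable subsets of `E`. -/
def Maxitive [MeasurableSpace E] (ν : Set E → ℝ≥0∞) : Prop :=
  ν ∅ = 0 ∧ ∀ A B : Set E, MeasurableSet A → MeasurableSet B →
    ν (A ∪ B) = max (ν A) (ν B)

/-- A σ-maxitive measure: a maxitive measure commuting with countable nondecreasing unions. -/
def SigmaMaxitive [MeasurableSpace E] (ν : Set E → ℝ≥0∞) : Prop :=
  Maxitive ν ∧ ∀ B : ℕ → Set E, (∀ n, MeasurableSet (B n)) → Monotone B →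
    ν (⋃ n, B n) = ⨆ n, ν (B n)

/-- `N` is `τ`-negligible: it is contained in a measurable set of `τ`-measure zero. -/
def Negligible [MeasurableSpace E] (τ : Set E → ℝ≥0∞) (N : Set E) : Prop :=
  ∃ B : Set E, MeasurableSet B ∧ N ⊆ B ∧ τ B = 0

/-- The `τ`-essential supremum of `f` over `B`: `inf { t > 0 : B ∩ {f > t} is τ-negligible }`. -/
noncomputable def essSupOn [MeasurableSpace E] (τ : Set E → ℝ≥0∞) (f : E → ℝ≥0∞)
    (B : Set E) : ℝ≥0∞ :=
  sInf {t : ℝ≥0∞ | 0 < t ∧ Negligible τ (B ∩ {x | t < f x})}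

/-- `ν ≪ τ`: absolute continuity. -/
def AbsCont [MeasurableSpace E] (ν τ : Set E → ℝ≥0∞) : Prop :=
  ∀ B : Set E, MeasurableSet B → τ B = 0 → ν B = 0

/-- `ν ⋘ τ`: strong absolute continuity, i.e. `ν` has a measurable relative density
with respect to `τ`. -/
def StrongAbsCont [MeasurableSpace E] (ν τ : Set E → ℝ≥0∞) : Prop :=
  ∃ f : E → ℝ≥0∞, Premeasurable f ∧ ∀ B : Set E, MeasurableSet B → ν B = essSupOn τ f B

/-- `c` is a cardinal density of `ν`: `ν B = sup_{x ∈ B} c x` for every measurable `B`. -/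
def IsCardinalDensity [MeasurableSpace E] (ν : Set E → ℝ≥0∞) (c : E → ℝ≥0∞) : Prop :=
  ∀ B : Set E, MeasurableSet B → ν B = ⨆ x ∈ B, c x

/-- `τ` is essential: there exists a σ-finite σ-additive measure `m` with the same
null measurable sets. -/
def Essential [MeasurableSpace E] (τ : Set E → ℝ≥0∞) : Prop :=
  ∃ m : Measure E, SigmaFinite m ∧ ∀ B : Set E, MeasurableSet B → (0 < τ B ↔ 0 < m B)

/-- A σ-ideal of the σ-algebra of measurable sets. -/
def SigmaIdeal [MeasurableSpace E] (I : Set (Set E)) : Prop :=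
  I.Nonempty ∧ (∀ S ∈ I, MeasurableSet S) ∧
  (∀ f : ℕ → Set E, (∀ n, f n ∈ I) → (⋃ n, f n) ∈ I) ∧
  (∀ B S : Set E, MeasurableSet B → S ∈ I → B ⊆ S → B ∈ I)

/-- `τ` is σ-principal: every σ-ideal has a greatest element modulo `τ`-negligible sets. -/
def SigmaPrincipal [MeasurableSpace E] (τ : Set E → ℝ≥0∞) : Prop :=
  ∀ I : Set (Set E), SigmaIdeal I → ∃ L ∈ I, ∀ S ∈ I, Negligible τ (S \ L)

/-- A pseudo-multiplication on `[0,∞]`. -/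
structure PseudoMul where
  op : ℝ≥0∞ → ℝ≥0∞ → ℝ≥0∞
  assoc : ∀ a b c, op (op a b) c = op a (op b c)
  contOn : ContinuousOn (fun q : ℝ≥0∞ × ℝ≥0∞ => op q.1 q.2) (Set.Ioo 0 ⊤ ×ˢ Set.univ)
  contLeft : ∀ t, ContinuousOn (fun s => op s t) (Set.Ioi 0)
  monoLeft : ∀ t, Monotone fun s => op s t
  monoRight : ∀ s, Monotone (op s)
  one : ℝ≥0∞
  one_op : ∀ t, op one t = t
  eq_zero : ∀ s t, op s t = 0 → s = 0 ∨ t = 0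
  zero_op : ∀ t, op 0 t = 0
  op_zero : ∀ t, op t 0 = 0

/-- `t` is `⊙`-finite: `inf_{s > 0} s ⊙ t = 0`. -/
def OdotFinite (p : PseudoMul) (t : ℝ≥0∞) : Prop :=
  (⨅ s ∈ Set.Ioi (0 : ℝ≥0∞), p.op s t) = 0

/-- The idempotent `⊙`-integral `∫_B f ⊙ dτ = sup_{t ∈ [0,∞)} t ⊙ τ (B ∩ {f > t})`. -/
noncomputable def iInt [MeasurableSpace E] (p : PseudoMul) (τ : Set E → ℝ≥0∞)
    (f : E → ℝ≥0∞) (B : Set E) : ℝ≥0∞ :=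
  ⨆ t ∈ Set.Iio (⊤ : ℝ≥0∞), p.op t (τ (B ∩ {x | t < f x}))

/-- `ν ≪_⊙ τ`: `ν B ≤ ∞ ⊙ τ B` for every measurable `B`. -/
def OdotAbsCont [MeasurableSpace E] (p : PseudoMul) (ν τ : Set E → ℝ≥0∞) : Prop :=
  ∀ B : Set E, MeasurableSet B → ν B ≤ p.op ⊤ (τ B)

/-- `ν` is semi-`⊙`-finite. -/
def SemiOdotFinite [MeasurableSpace E] (p : PseudoMul) (ν : Set E → ℝ≥0∞) : Prop :=
  ∀ B : Set E, MeasurableSet B →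
    ν B = ⨆ A ∈ {A : Set E | MeasurableSet A ∧ A ⊆ B ∧ OdotFinite p (ν A)}, ν A

/-- `τ` is σ-`⊙`-finite. -/
def SigmaOdotFinite [MeasurableSpace E] (p : PseudoMul) (τ : Set E → ℝ≥0∞) : Prop :=
  ∃ B : ℕ → Set E, (∀ n, MeasurableSet (B n)) ∧ (⋃ n, B n) = Set.univ ∧
    ∀ n, OdotFinite p (τ (B n))

/-- Continuity from below. -/
def ContFromBelow [MeasurableSpace E] (ν : Set E → ℝ≥0∞) : Prop :=
  ∀ B : ℕ → Set E, (∀ n, MeasurableSet (B n)) → Monotone B →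
    Tendsto (fun n => ν (B n)) atTop (nhds (ν (⋃ n, B n)))

/-- Continuity from above (no finiteness assumption). -/
def ContFromAbove [MeasurableSpace E] (ν : Set E → ℝ≥0∞) : Prop :=
  ∀ B : ℕ → Set E, (∀ n, MeasurableSet (B n)) → Antitone B →
    Tendsto (fun n => ν (B n)) atTop (nhds (ν (⋂ n, B n)))

/-- An optimal measure: a maxitive measure continuous from below and from above. -/
def Optimal [MeasurableSpace E] (ν : Set E → ℝ≥0∞) : Prop :=
  Maxitive ν ∧ ContFromBelow ν ∧ ContFromAbove ν


/-!
Fix a finite measure `μ` with the same null sets as `ν`. For every level `c`, the sets of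
`ν`-measure at most `c` form a σ-ideal (by σ-maxitivity), and a sequence in it whose
`μ`-measures approach their supremum has a union `L c` that contains every member of the
ideal up to a null set. For rational levels `q`, the density `f x = inf {q | x ∈ L q}`
satisfies `ν {f < s} ≤ s`, while `B ∩ {f > q}` is null as soon as `ν B ≤ q`; these two
facts give `ν B = ess sup_B f`, and `ν B = sup_B f` when only `∅` is negligible.
-/

theorem ENNReal.le_of_forall_lt_ofReal_rat {a b : ℝ≥0∞}
    (h : ∀ q : ℚ, b < ENNReal.ofReal q → a ≤ ENNReal.ofReal q) : a ≤ b :=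
  le_of_forall_gt_imp_ge_of_dense fun c hbc => by
    obtain ⟨q, -, hbq, hqc⟩ := ENNReal.lt_iff_exists_rat_btwn.1 hbc
    exact (h q hbq).trans hqc.le

noncomputable def levelDensity (L : ℚ → Set E) (x : E) : ℝ≥0∞ :=
  ⨅ (q : ℚ) (_ : x ∈ L q), ENNReal.ofReal q

theorem levelDensity_le {L : ℚ → Set E} {x : E} {q : ℚ} (hx : x ∈ L q) :
    levelDensity L x ≤ ENNReal.ofReal q :=
  iInf₂_le q hx

theorem setOf_levelDensity_lt (L : ℚ → Set E) (s : ℝ≥0∞) :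
    {x | levelDensity L x < s} = ⋃ q : {q : ℚ // ENNReal.ofReal q < s}, L q := by
  ext x
  simp [levelDensity, iInf_lt_iff, and_comm]

section

variable [MeasurableSpace E]

theorem Measurable.premeasurable {f : E → ℝ≥0∞} (hf : Measurable f) : Premeasurable f :=
  fun _ => measurableSet_lt measurable_const hf

theorem Negligible.mono {τ : Set E → ℝ≥0∞} {N N' : Set E} (h : Negligible τ N') (hN : N ⊆ N') :
    Negligible τ N :=
  let ⟨B, hB, hN'B, hτB⟩ := h
  ⟨B, hB, hN.trans hN'B, hτB⟩

def sublevelSets (ν : Set E → ℝ≥0∞) (c : ℝ≥0∞) : Set (Set E) :=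
  {B | MeasurableSet B ∧ ν B ≤ c}

namespace Maxitive

variable {ν : Set E → ℝ≥0∞} {A B : Set E}

theorem mono (hν : Maxitive ν) (hA : MeasurableSet A) (hB : MeasurableSet B) (h : A ⊆ B) :
    ν A ≤ ν B := by
  rw [← union_eq_self_of_subset_left h, hν.2 A B hA hB]
  exact le_max_left ..

theorem le_of_negligible_diff (hν : Maxitive ν) (hA : MeasurableSet A) (hB : MeasurableSet B)
    (h : Negligible ν (A \ B)) : ν A ≤ ν B := by
  obtain ⟨N, hN, hAB, hνN⟩ := h
  calc ν A ≤ ν (B ∪ N) := hν.mono hA (hB.union hN) (sdiff_subset_iff.1 hAB)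
    _ = ν B := by rw [hν.2 B N hB hN, hνN, max_eq_left zero_le]

end Maxitive

namespace SigmaMaxitive

variable {ν : Set E → ℝ≥0∞}

theorem measure_iUnion_nat_le (hν : SigmaMaxitive ν) {A : ℕ → Set E}
    (hA : ∀ n, MeasurableSet (A n)) : ν (⋃ n, A n) ≤ ⨆ n, ν (A n) := by
  have hAcc : ∀ n, MeasurableSet (accumulate A n) := fun n =>
    MeasurableSet.biUnion (to_countable _) fun i _ => hA i
  have hAcc_le : ∀ n, ν (accumulate A n) ≤ ⨆ n, ν (A n) := by
    intro n
    induction n with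
    | zero => rw [accumulate_zero_nat]; exact le_iSup (fun n => ν (A n)) 0
    | succ n ih =>
      rw [accumulate_succ, hν.1.2 _ _ (hAcc n) (hA _)]
      exact max_le ih (le_iSup (fun n => ν (A n)) (n + 1))
  rw [← iUnion_accumulate, hν.2 _ hAcc monotone_accumulate]
  exact iSup_le hAcc_le

theorem measure_iUnion_le {ι : Type*} [Countable ι] (hν : SigmaMaxitive ν) {A : ι → Set E}
    (hA : ∀ i, MeasurableSet (A i)) : ν (⋃ i, A i) ≤ ⨆ i, ν (A i) := by
  rcases isEmpty_or_nonempty ι with hι | hι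
  · simp [hν.1.1]
  · obtain ⟨g, hg⟩ := exists_surjective_nat ι
    rw [← hg.iUnion_comp, ← hg.iSup_comp]
    exact hν.measure_iUnion_nat_le fun n => hA (g n)

theorem sigmaIdeal_sublevelSets (hν : SigmaMaxitive ν) (c : ℝ≥0∞) :
    SigmaIdeal (sublevelSets ν c) :=
  ⟨⟨∅, MeasurableSet.empty, hν.1.1.trans_le zero_le⟩, fun _ hS => hS.1,
    fun _ hA => ⟨.iUnion fun n => (hA n).1,
      (hν.measure_iUnion_nat_le fun n => (hA n).1).trans (iSup_le fun n => (hA n).2)⟩,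
    fun _ _ hB hS hBS => ⟨hB, (hν.1.mono hB hS.1 hBS).trans hS.2⟩⟩

end SigmaMaxitive

namespace SigmaIdeal

variable {I : Set (Set E)}

theorem union_mem (hI : SigmaIdeal I) {S T : Set E} (hS : S ∈ I) (hT : T ∈ I) : S ∪ T ∈ I := by
  refine hI.2.2.2 _ _ ((hI.2.1 S hS).union (hI.2.1 T hT))
    (hI.2.2.1 (fun n => if n = 0 then S else T) fun n => ?_) ?_
  · split_ifs <;> assumption
  · exact union_subset (subset_iUnion_of_subset 0 subset_rfl)
      (subset_iUnion_of_subset 1 subset_rfl)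

theorem exists_forall_measure_diff_eq_zero (hI : SigmaIdeal I) (μ : Measure E)
    [IsFiniteMeasure μ] : ∃ L ∈ I, ∀ S ∈ I, μ (S \ L) = 0 := by
  obtain ⟨u, -, hu, huI⟩ := exists_seq_tendsto_sSup (hI.1.image μ) (OrderTop.bddAbove _)
  choose B hBI hBu using huI
  have hLI : (⋃ n, B n) ∈ I := hI.2.2.1 B hBI
  have hsSup : sSup (μ '' I) ≤ μ (⋃ n, B n) :=
    le_of_tendsto' hu fun n => hBu n ▸ measure_mono (subset_iUnion B n)
  refine ⟨⋃ n, B n, hLI, fun S hS => ?_⟩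
  have hSL : μ (S ∪ ⋃ n, B n) ≤ μ (⋃ n, B n) :=
    (le_sSup (mem_image_of_mem μ (hI.union_mem hS hLI))).trans hsSup
  rw [measure_sdiff' S (hI.2.1 _ hLI).nullMeasurableSet (measure_ne_top μ _)]
  exact tsub_eq_zero_of_le hSL

end SigmaIdeal

namespace Essential

variable {τ : Set E → ℝ≥0∞}

theorem exists_isFiniteMeasure_null_iff (hτ : Essential τ) :
    ∃ μ : Measure E, IsFiniteMeasure μ ∧ ∀ B, MeasurableSet B → (τ B = 0 ↔ μ B = 0) := by
  obtain ⟨m, hm, hτm⟩ := hτ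
  obtain ⟨μ, hμ, hmμ, hμm⟩ := exists_isFiniteMeasure_absolutelyContinuous m
  refine ⟨μ, hμ, fun B hB => ?_⟩
  have hτm_zero : τ B = 0 ↔ m B = 0 := by
    simpa only [pos_iff_ne_zero, ne_eq, not_iff_not] using hτm B hB
  exact hτm_zero.trans ⟨fun h => hμm h, fun h => hmμ h⟩

theorem sigmaPrincipal (hτ : Essential τ) : SigmaPrincipal τ := by
  intro I hI
  obtain ⟨μ, _, hμ⟩ := hτ.exists_isFiniteMeasure_null_iff
  obtain ⟨L, hL, hLmax⟩ := hI.exists_forall_measure_diff_eq_zero μ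
  refine ⟨L, hL, fun S hS => ?_⟩
  have hSL : MeasurableSet (S \ L) := (hI.2.1 S hS).diff (hI.2.1 L hL)
  exact ⟨S \ L, hSL, subset_rfl, (hμ _ hSL).2 (hLmax S hS)⟩

end Essential

section levelDensity

variable {L : ℚ → Set E}

theorem measurable_levelDensity (hL : ∀ q, MeasurableSet (L q)) : Measurable (levelDensity L) :=
  measurable_of_Iio fun s => by
    change MeasurableSet {x | levelDensity L x < s}
    rw [setOf_levelDensity_lt]
    exact .iUnion fun q => hL q

variable {ν : Set E → ℝ≥0∞} {B : Set E}

theorem SigmaMaxitive.measure_setOf_levelDensity_lt_le (hν : SigmaMaxitive ν)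
    (hL : ∀ q : ℚ, L q ∈ sublevelSets ν (ENNReal.ofReal q)) (s : ℝ≥0∞) :
    ν {x | levelDensity L x < s} ≤ s := by
  rw [setOf_levelDensity_lt]
  calc ν (⋃ q : {q : ℚ // ENNReal.ofReal q < s}, L q)
      ≤ ⨆ q : {q : ℚ // ENNReal.ofReal q < s}, ν (L q) := hν.measure_iUnion_le fun q => (hL q).1
    _ ≤ s := iSup_le fun q => (hL q).2.trans q.2.le

variable (hν : SigmaMaxitive ν) (hL : ∀ q : ℚ, L q ∈ sublevelSets ν (ENNReal.ofReal q))
  (hLmax : ∀ q : ℚ, ∀ S ∈ sublevelSets ν (ENNReal.ofReal q), Negligible ν (S \ L q))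
include hν hL hLmax

theorem eq_essSupOn_levelDensity (hB : MeasurableSet B) :
    ν B = essSupOn ν (levelDensity L) B := by
  have hf := measurable_levelDensity fun q => (hL q).1
  refine le_antisymm (le_sInf fun t ⟨_, ht⟩ => ?_) ?_
  · refine ENNReal.le_of_forall_lt_ofReal_rat fun q htq => ?_
    have hB_diff : Negligible ν (B \ {x | levelDensity L x < ENNReal.ofReal q}) :=
      ht.mono fun x hx => ⟨hx.1, htq.trans_le (not_lt.1 hx.2)⟩
    exact (hν.1.le_of_negligible_diff hB (measurableSet_lt hf measurable_const) hB_diff).trans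
      (hν.measure_setOf_levelDensity_lt_le hL _)
  · refine ENNReal.le_of_forall_lt_ofReal_rat fun q hq => sInf_le ⟨pos_of_gt hq, ?_⟩
    exact (hLmax q B ⟨hB, hq.le⟩).mono fun x hx =>
      ⟨hx.1, fun hxL => (levelDensity_le hxL).not_gt hx.2⟩

theorem isCardinalDensity_levelDensity (hN : ∀ N : Set E, Negligible ν N → N = ∅) :
    IsCardinalDensity ν (levelDensity L) := by
  have hf := measurable_levelDensity fun q => (hL q).1
  refine fun B hB => le_antisymm ?_ (iSup₂_le fun x hx => ?_)
  · refine ENNReal.le_of_forall_lt_ofReal_rat fun q hq => ?_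
    exact (hν.1.mono hB (measurableSet_lt hf measurable_const)
      fun x hx => (le_biSup (levelDensity L) hx).trans_lt hq).trans
      (hν.measure_setOf_levelDensity_lt_le hL _)
  · refine ENNReal.le_of_forall_lt_ofReal_rat fun q hq => levelDensity_le ?_
    by_contra hxL
    exact eq_empty_iff_forall_notMem.1 (hN _ (hLmax q B ⟨hB, hq.le⟩)) x ⟨hx, hxL⟩

end levelDensity

end

/-- An essential σ-maxitive measure is autocontinuous; if moreover the empty set is its only
negligible subset, it has a measurable cardinal density. -/
theorem essential_autocontinuous_and_cardinalDensity [MeasurableSpace E]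
    (ν : Set E → ℝ≥0∞) (hν : SigmaMaxitive ν) (hess : Essential ν) :
    StrongAbsCont ν ν ∧
    ((∀ N : Set E, Negligible ν N → N = ∅) →
      ∃ c : E → ℝ≥0∞, Premeasurable c ∧ IsCardinalDensity ν c) := by
  choose L hL hLmax using fun q : ℚ =>
    hess.sigmaPrincipal _ (hν.sigmaIdeal_sublevelSets (ENNReal.ofReal q))
  have hf : Premeasurable (levelDensity L) :=
    (measurable_levelDensity fun q => (hL q).1).premeasurable
  exact ⟨⟨levelDensity L, hf, fun B hB => eq_essSupOn_levelDensity hν hL hLmax hB⟩,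
    fun hN => ⟨levelDensity L, hf, isCardinalDensity_levelDensity hν hL hLmax hN⟩⟩
end

section
/- Let ⊙ be a pseudo-multiplication on [0,∞] and let ν, τ be σ-maxitive measures on a σ-algebra 𝓑. If ν is semi-⊙-finite and admits a 𝓑-measurable density c with respect to τ (i.e. ν(B) = ∫_B c ⊙ dτ for all B ∈ 𝓑), then ν admits a 𝓑-measurable density with respect to τ taking only ⊙-finite values. -/
open scoped ENNReal
open Set Filter MeasureTheory

variable {E : Type*}

/-! The values that are not `⊙`-finite form an up-set of `[0,∞]`, so the set `N` where `c` takes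
such values is measurable. If `τ (A ∩ N) ≠ 0`, then `∫_A c ⊙ dτ ≥ t ⊙ r` for some non-`⊙`-finite
`t` and some `r ≠ 0`, so `ν A` is not `⊙`-finite. Hence every `A` with `ν A` `⊙`-finite is
`τ`-null on `N`, replacing `c` by `0` on `N` does not change `ν A`, and by semi-`⊙`-finiteness it
does not change `ν` at all. -/

open scoped Topology

lemma premeasurable_iff_measurable [MeasurableSpace E] {f : E → ℝ≥0∞} :
    Premeasurable f ↔ Measurable f :=
  ⟨measurable_of_Ioi, fun hf _ => hf measurableSet_Ioi⟩

namespace PseudoMul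

variable (p : PseudoMul)

lemma op_le_of_forall_lt_op_le {θ r v : ℝ≥0∞} (hθ : 0 < θ) (h : ∀ t < θ, p.op t r ≤ v) :
    p.op θ r ≤ v := by
  obtain ⟨t, -, ht, hlim⟩ := exists_seq_strictMono_tendsto' hθ
  have hlim' : Tendsto (fun n => p.op (t n) r) atTop (𝓝 (p.op θ r)) :=
    (p.contLeft r θ hθ).tendsto.comp <| tendsto_nhdsWithin_of_tendsto_nhds_of_eventually_within _
      hlim (Eventually.of_forall fun n => (ht n).1)
  exact le_of_tendsto' hlim' fun n => h _ (ht n).2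

end PseudoMul

section OdotFinite

lemma OdotFinite.mono {p : PseudoMul} {t u : ℝ≥0∞} (hu : OdotFinite p u) (h : t ≤ u) :
    OdotFinite p t :=
  le_antisymm ((iInf₂_mono fun s _ => p.monoRight s h).trans_eq hu) zero_le

variable (p : PseudoMul)

lemma odotFinite_zero : OdotFinite p 0 :=
  le_antisymm ((iInf₂_le 1 one_pos).trans_eq (p.op_zero 1)) zero_le

lemma isUpperSet_setOf_not_odotFinite : IsUpperSet {t | ¬ OdotFinite p t} :=
  fun _ _ h ht hu => ht (hu.mono h)

/-- The infimum over `s > 0` of `s ⊙ (t ⊙ r)` dominates `(inf_{s > 0} s ⊙ t) ⊙ r`, which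
vanishes only if one of its factors does. -/
lemma not_odotFinite_of_op_le {t r v : ℝ≥0∞} (ht : ¬ OdotFinite p t) (hr : r ≠ 0)
    (hv : p.op t r ≤ v) : ¬ OdotFinite p v := by
  intro hfin
  have hle : p.op (⨅ s ∈ Ioi (0 : ℝ≥0∞), p.op s t) r ≤
      ⨅ s ∈ Ioi (0 : ℝ≥0∞), p.op s (p.op t r) :=
    le_iInf₂ fun s hs => (p.assoc s t r) ▸ p.monoLeft r (iInf₂_le s hs)
  rw [hfin.mono hv] at hle
  exact (p.eq_zero _ _ (le_antisymm hle zero_le)).elim ht hr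

lemma Premeasurable.measurableSet_setOf_not_odotFinite [MeasurableSpace E] {f : E → ℝ≥0∞}
    (hf : Premeasurable f) : MeasurableSet {x | ¬ OdotFinite p (f x)} :=
  premeasurable_iff_measurable.mp hf (isUpperSet_setOf_not_odotFinite p).ordConnected.measurableSet

end OdotFinite

section Maxitive

variable [MeasurableSpace E] {τ : Set E → ℝ≥0∞}

lemma Maxitive.mono_s6 (hτ : Maxitive τ) {A B : Set E} (hA : MeasurableSet A)
    (hB : MeasurableSet B) (hAB : A ⊆ B) : τ A ≤ τ B := by
  simpa [union_eq_self_of_subset_left hAB] using (hτ.2 A B hA hB).ge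

lemma Maxitive.apply_diff_of_apply_inter_eq_zero (hτ : Maxitive τ) {S M : Set E}
    (hS : MeasurableSet S) (hM : MeasurableSet M) (h : τ (S ∩ M) = 0) : τ (S \ M) = τ S := by
  rw [← sdiff_union_inter S M, hτ.2 _ _ (hS.diff hM) (hS.inter hM), h, max_eq_left zero_le,
    sdiff_union_inter]

lemma SigmaMaxitive.exists_lt_apply_inter_ne_zero (hτ : SigmaMaxitive τ) {f : E → ℝ≥0∞}
    (hf : Premeasurable f) {A : Set E} (hA : MeasurableSet A) {θ : ℝ≥0∞}
    (h : τ (A ∩ {x | θ < f x}) ≠ 0) : ∃ t, θ < t ∧ τ (A ∩ {x | t < f x}) ≠ 0 := by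
  have hθ : θ < ⊤ := by
    by_contra! hθ
    simp [top_le_iff.mp hθ, hτ.1.1] at h
  obtain ⟨t, htanti, ht, hlim⟩ := exists_seq_strictAnti_tendsto' hθ
  have hunion : A ∩ {x | θ < f x} = ⋃ n, A ∩ {x | t n < f x} := by
    ext x
    simp only [mem_inter_iff, mem_iUnion, mem_ofPred_eq]
    refine ⟨fun ⟨hxA, hx⟩ => ?_, fun ⟨n, hxA, hx⟩ => ⟨hxA, (ht n).1.trans hx⟩⟩
    obtain ⟨n, hn⟩ := (hlim.eventually (eventually_lt_nhds hx)).exists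
    exact ⟨n, hxA, hn⟩
  have hmono : Monotone fun n => A ∩ {x | t n < f x} := fun m n hmn =>
    inter_subset_inter_right _ fun x hx => (htanti.antitone hmn).trans_lt hx
  rw [hunion, hτ.2 _ (fun n => hA.inter (hf (t n))) hmono] at h
  obtain ⟨n, hn⟩ : ∃ n, τ (A ∩ {x | t n < f x}) ≠ 0 := by
    by_contra! hcon
    simp [hcon] at h
  exact ⟨t n, (ht n).1, hn⟩

end Maxitive

section iInt

variable [MeasurableSpace E] (p : PseudoMul) {τ : Set E → ℝ≥0∞} {f g : E → ℝ≥0∞}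

lemma op_le_iInt {t : ℝ≥0∞} (ht : t < ⊤) (B : Set E) :
    p.op t (τ (B ∩ {x | t < f x})) ≤ iInt p τ f B :=
  le_iSup₂ (f := fun s (_ : s ∈ Iio ⊤) => p.op s (τ (B ∩ {x | s < f x}))) t ht

lemma iInt_mono_set (hτ : Maxitive τ) (hf : Premeasurable f) {A B : Set E}
    (hA : MeasurableSet A) (hB : MeasurableSet B) (hAB : A ⊆ B) :
    iInt p τ f A ≤ iInt p τ f B :=
  iSup₂_mono fun t _ => p.monoRight t <|
    hτ.mono_s6 (hA.inter (hf t)) (hB.inter (hf t)) (inter_subset_inter_left _ hAB)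

lemma iInt_mono_fun (hτ : Maxitive τ) (hf : Premeasurable f) (hg : Premeasurable g)
    (hfg : ∀ x, f x ≤ g x) {B : Set E} (hB : MeasurableSet B) :
    iInt p τ f B ≤ iInt p τ g B :=
  iSup₂_mono fun t _ => p.monoRight t <| hτ.mono_s6 (hB.inter (hf t)) (hB.inter (hg t))
    (inter_subset_inter_right _ fun _ hx => hx.trans_le (hfg _))

lemma iInt_congr_of_eqOn_compl (hτ : Maxitive τ) (hf : Premeasurable f) (hg : Premeasurable g)
    {A M : Set E} (hA : MeasurableSet A) (hM : MeasurableSet M) (hAM : τ (A ∩ M) = 0)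
    (hfg : EqOn f g Mᶜ) : iInt p τ f A = iInt p τ g A := by
  have hnull : ∀ {h : E → ℝ≥0∞}, Premeasurable h → ∀ t,
      τ ((A ∩ {x | t < h x}) \ M) = τ (A ∩ {x | t < h x}) := fun hh t =>
    hτ.apply_diff_of_apply_inter_eq_zero (hA.inter (hh t)) hM <| le_antisymm
      ((hτ.mono_s6 ((hA.inter (hh t)).inter hM) (hA.inter hM)
        (inter_subset_inter_left _ inter_subset_left)).trans_eq hAM) zero_le
  have hdiff : ∀ t, (A ∩ {x | t < f x}) \ M = (A ∩ {x | t < g x}) \ M := fun t => by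
    ext x
    by_cases hx : x ∈ M
    · simp [hx]
    · simp [hx, hfg hx]
  refine iSup_congr fun t => iSup_congr fun _ => ?_
  rw [← hnull hf, ← hnull hg, hdiff]

/-- Let `θ` be the infimum of the non-`⊙`-finite values and `N = {x | ¬ OdotFinite p (f x)}`.
If `θ` is `⊙`-finite, then `N = {θ < f}` and σ-maxitivity provides a non-`⊙`-finite level `t > θ`
with `τ (A ∩ {t < f}) ≠ 0`; otherwise `N = {θ ≤ f}` and left continuity of `⊙` gives
`θ ⊙ τ (A ∩ N) ≤ ∫_A f ⊙ dτ`. -/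
lemma not_odotFinite_iInt_of_apply_inter_ne_zero (hτ : SigmaMaxitive τ) (hf : Premeasurable f)
    {A : Set E} (hA : MeasurableSet A) (h : τ (A ∩ {x | ¬ OdotFinite p (f x)}) ≠ 0) :
    ¬ OdotFinite p (iInt p τ f A) := by
  have hN := hf.measurableSet_setOf_not_odotFinite p
  set θ := sInf {t | ¬ OdotFinite p t}
  have hθ_le : ∀ {x}, ¬ OdotFinite p (f x) → θ ≤ f x := fun hx => sInf_le hx
  by_cases hθ : OdotFinite p θ
  · have hsub : A ∩ {x | ¬ OdotFinite p (f x)} ⊆ A ∩ {x | θ < f x} :=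
      inter_subset_inter_right _ fun x hx =>
        (hθ_le hx).lt_of_ne fun heq => hx (heq ▸ hθ)
    obtain ⟨t, hθt, ht⟩ := hτ.exists_lt_apply_inter_ne_zero hf hA <| fun h0 =>
      h (le_antisymm ((hτ.1.mono_s6 (hA.inter hN) (hA.inter (hf θ)) hsub).trans_eq h0) zero_le)
    obtain ⟨u, hu, hut⟩ := sInf_lt_iff.mp hθt
    have htop : t < ⊤ := lt_top_iff_ne_top.mpr fun htop => ht (by simp [htop, hτ.1.1])
    exact not_odotFinite_of_op_le p (isUpperSet_setOf_not_odotFinite p hut.le hu) ht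
      (op_le_iInt p htop A)
  · refine not_odotFinite_of_op_le p hθ h (p.op_le_of_forall_lt_op_le
      (pos_iff_ne_zero.mpr fun h0 => hθ (h0 ▸ odotFinite_zero p)) fun t ht => ?_)
    refine (p.monoRight t <| hτ.1.mono_s6 (hA.inter hN) (hA.inter (hf t)) <|
      inter_subset_inter_right _ fun x hx => ht.trans_le (hθ_le hx)).trans ?_
    exact op_le_iInt p (ht.trans_le le_top) A

end iInt

theorem semiOdotFinite_density_odotFinite_valued_general [MeasurableSpace E] (p : PseudoMul)
    (ν τ : Set E → ℝ≥0∞) (hτ : SigmaMaxitive τ)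
    (hsemi : SemiOdotFinite p ν) (c : E → ℝ≥0∞) (hc : Premeasurable c)
    (hd : ∀ B : Set E, MeasurableSet B → ν B = iInt p τ c B) :
    ∃ c' : E → ℝ≥0∞, Premeasurable c' ∧ (∀ x, OdotFinite p (c' x)) ∧
      ∀ B : Set E, MeasurableSet B → ν B = iInt p τ c' B := by
  set N := {x | ¬ OdotFinite p (c x)}
  have hN : MeasurableSet N := hc.measurableSet_setOf_not_odotFinite p
  have hc' : Premeasurable (Nᶜ.indicator c) :=
    premeasurable_iff_measurable.mpr ((premeasurable_iff_measurable.mp hc).indicator hN.compl)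
  refine ⟨Nᶜ.indicator c, hc', fun x => ?_, fun B hB => le_antisymm ?_ ?_⟩
  · by_cases hx : x ∈ N
    · simpa [indicator_of_notMem (notMem_compl_iff.mpr hx)] using odotFinite_zero p
    · simpa [indicator_of_mem (mem_compl hx)] using not_not.mp hx
  · rw [hsemi B hB]
    refine iSup₂_le fun A ⟨hA, hAB, hfin⟩ => ?_
    have hAN : τ (A ∩ N) = 0 := by
      by_contra h
      exact not_odotFinite_iInt_of_apply_inter_ne_zero p hτ hc hA h (hd A hA ▸ hfin)
    rw [hd A hA, iInt_congr_of_eqOn_compl p hτ.1 hc hc' hA hN hAN fun x hx => by simp [hx]]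
    exact iInt_mono_set p hτ.1 hc' hA hB hAB
  · rw [hd B hB]
    exact iInt_mono_fun p hτ.1 hc' hc (fun x => indicator_le_self _ _ x) hB

/-- A semi-`⊙`-finite σ-maxitive measure with a measurable density admits a
measurable density taking only `⊙`-finite values. -/
theorem semiOdotFinite_density_odotFinite_valued [MeasurableSpace E] (p : PseudoMul)
    (ν τ : Set E → ℝ≥0∞) (hν : SigmaMaxitive ν) (hτ : SigmaMaxitive τ)
    (hsemi : SemiOdotFinite p ν) (c : E → ℝ≥0∞) (hc : Premeasurable c)
    (hd : ∀ B : Set E, MeasurableSet B → ν B = iInt p τ c B) :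
    ∃ c' : E → ℝ≥0∞, Premeasurable c' ∧ (∀ x, OdotFinite p (c' x)) ∧
      ∀ B : Set E, MeasurableSet B → ν B = iInt p τ c' B :=
  semiOdotFinite_density_odotFinite_valued_general p ν τ hτ hsemi c hc hd
end
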